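/- There is no factorizable stochastic model whose predicted phenomenon equals the singlet phenomenon; that is, there do not exist a probability space (Λ, μ) and functions p(A|a, λ), q(B|b, λ) ∈ [0, 1], measurable in λ, with Σ_A p(A|a, λ) = Σ_B q(B|b, λ) = 1, such that ∫_Λ p(A|a, λ)·q(B|b, λ) dμ(λ) = (1 − A·B·⟨a, b⟩)/4 for all A, B ∈ {−1, 1} and all unit vectors a, b ∈ ℝ³. -/

import Mathlib

open MeasureTheory
open scoped RealInnerProductSpace

/-!
Write `E(a, b) = ∫ (p(1|a) - p(-1|a)) (q(1|b) - q(-1|b)) dμ` for the correlation of the model.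
Factorizability makes `E` the average over `λ` of a product of two `[-1, 1]`-valued functions,
one depending only on `a`, the other only on `b`, so the CHSH combination
`E(a₁,b₁) + E(a₁,b₂) + E(a₂,b₁) - E(a₂,b₂)` is pointwise, hence on average, at most `2` in absolute
value. The singlet phenomenon gives `E(a, b) = -⟨a, b⟩`, and for orthogonal `a₁, a₂` and
`b₁, b₂ = (a₁ ± a₂)/√2` the CHSH combination equals `-2√2`.
-/

theorem abs_chsh_le_two {u₁ u₂ v₁ v₂ : ℝ} (hu₁ : |u₁| ≤ 1) (hu₂ : |u₂| ≤ 1) (hv₁ : |v₁| ≤ 1)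
    (hv₂ : |v₂| ≤ 1) : |u₁ * v₁ + u₁ * v₂ + u₂ * v₁ - u₂ * v₂| ≤ 2 := by
  have hv : |v₁ + v₂| + |v₁ - v₂| ≤ 2 := by
    rw [abs_le] at hv₁ hv₂
    rcases abs_cases (v₁ + v₂) with ⟨hs, -⟩ | ⟨hs, -⟩ <;>
      rcases abs_cases (v₁ - v₂) with ⟨hd, -⟩ | ⟨hd, -⟩ <;> linarith
  calc |u₁ * v₁ + u₁ * v₂ + u₂ * v₁ - u₂ * v₂|
      = |u₁ * (v₁ + v₂) + u₂ * (v₁ - v₂)| := by ring_nf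
    _ ≤ |u₁| * |v₁ + v₂| + |u₂| * |v₁ - v₂| := by
      rw [← abs_mul, ← abs_mul]; exact abs_add_le _ _
    _ ≤ |v₁ + v₂| + |v₁ - v₂| := by
      gcongr <;> apply mul_le_of_le_one_left (abs_nonneg _) <;> assumption
    _ ≤ 2 := hv

section

variable {Λ : Type*} [MeasurableSpace Λ] {μ : Measure Λ}

theorem integrable_mul_of_abs_le_one [IsFiniteMeasure μ] {f g : Λ → ℝ}
    (hf : AEStronglyMeasurable f μ) (hg : AEStronglyMeasurable g μ) (hf₁ : ∀ l, |f l| ≤ 1)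
    (hg₁ : ∀ l, |g l| ≤ 1) : Integrable (fun l => f l * g l) μ :=
  (Integrable.of_bound hg 1 (ae_of_all _ hg₁)).bdd_mul hf (ae_of_all _ hf₁)

theorem integral_sub_mul_sub {f₁ f₂ g₁ g₂ : Λ → ℝ}
    (h₁₁ : Integrable (fun l => f₁ l * g₁ l) μ) (h₁₂ : Integrable (fun l => f₁ l * g₂ l) μ)
    (h₂₁ : Integrable (fun l => f₂ l * g₁ l) μ) (h₂₂ : Integrable (fun l => f₂ l * g₂ l) μ) :
    ∫ l, (f₁ l - f₂ l) * (g₁ l - g₂ l) ∂μ =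
      ∫ l, f₁ l * g₁ l ∂μ - ∫ l, f₁ l * g₂ l ∂μ - ∫ l, f₂ l * g₁ l ∂μ + ∫ l, f₂ l * g₂ l ∂μ := by
  have hexpand : (fun l => (f₁ l - f₂ l) * (g₁ l - g₂ l)) =
      fun l => (f₁ l * g₁ l - f₁ l * g₂ l) - (f₂ l * g₁ l - f₂ l * g₂ l) := by
    funext l; ring
  rw [hexpand, integral_sub ?_ ?_, integral_sub h₁₁ h₁₂, integral_sub h₂₁ h₂₂]
  · ring
  all_goals fun_prop

theorem abs_chsh_integral_le_two [IsProbabilityMeasure μ] {f₁ f₂ g₁ g₂ : Λ → ℝ}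
    (hf₁ : AEStronglyMeasurable f₁ μ) (hf₂ : AEStronglyMeasurable f₂ μ)
    (hg₁ : AEStronglyMeasurable g₁ μ) (hg₂ : AEStronglyMeasurable g₂ μ)
    (hf₁' : ∀ l, |f₁ l| ≤ 1) (hf₂' : ∀ l, |f₂ l| ≤ 1)
    (hg₁' : ∀ l, |g₁ l| ≤ 1) (hg₂' : ∀ l, |g₂ l| ≤ 1) :
    |∫ l, f₁ l * g₁ l ∂μ + ∫ l, f₁ l * g₂ l ∂μ + ∫ l, f₂ l * g₁ l ∂μ
      - ∫ l, f₂ l * g₂ l ∂μ| ≤ 2 := by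
  have h₁₁ := integrable_mul_of_abs_le_one hf₁ hg₁ hf₁' hg₁'
  have h₁₂ := integrable_mul_of_abs_le_one hf₁ hg₂ hf₁' hg₂'
  have h₂₁ := integrable_mul_of_abs_le_one hf₂ hg₁ hf₂' hg₁'
  have h₂₂ := integrable_mul_of_abs_le_one hf₂ hg₂ hf₂' hg₂'
  have hsum : ∫ l, f₁ l * g₁ l + f₁ l * g₂ l + f₂ l * g₁ l - f₂ l * g₂ l ∂μ =
      ∫ l, f₁ l * g₁ l ∂μ + ∫ l, f₁ l * g₂ l ∂μ + ∫ l, f₂ l * g₁ l ∂μ - ∫ l, f₂ l * g₂ l ∂μ := by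
    rw [integral_sub ?_ h₂₂, integral_add ?_ h₂₁, integral_add h₁₁ h₁₂]
    all_goals fun_prop
  rw [← hsum, ← Real.norm_eq_abs]
  refine (norm_integral_le_of_norm_le_const (C := 2) (ae_of_all _ fun l => ?_)).trans_eq (by simp)
  exact abs_chsh_le_two (hf₁' l) (hf₂' l) (hg₁' l) (hg₂' l)

end

theorem exists_chsh_inner_eq_two_mul_sqrt_two {E : Type*} [NormedAddCommGroup E]
    [InnerProductSpace ℝ E] {u v : E} (hu : ‖u‖ = 1) (hv : ‖v‖ = 1) (huv : ⟪u, v⟫ = 0) :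
    ∃ w₁ w₂ : E, ‖w₁‖ = 1 ∧ ‖w₂‖ = 1 ∧ ⟪u, w₁⟫ + ⟪u, w₂⟫ + ⟪v, w₁⟫ - ⟪v, w₂⟫ = 2 * √2 := by
  have hsqrt : (√2)⁻¹ * √2 = 1 := inv_mul_cancel₀ (by positivity)
  have hadd : ‖u + v‖ = √2 := by
    rw [← Real.sqrt_sq (norm_nonneg _), norm_add_sq_real, hu, hv, huv]; norm_num
  have hsub : ‖u - v‖ = √2 := by
    rw [← Real.sqrt_sq (norm_nonneg _), norm_sub_sq_real, hu, hv, huv]; norm_num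
  refine ⟨(√2)⁻¹ • (u + v), (√2)⁻¹ • (u - v), ?_, ?_, ?_⟩
  · rw [norm_smul, hadd, Real.norm_of_nonneg (by positivity), hsqrt]
  · rw [norm_smul, hsub, Real.norm_of_nonneg (by positivity), hsqrt]
  · simp only [inner_smul_right, inner_add_right, inner_sub_right, real_inner_self_eq_norm_sq,
      real_inner_comm u v, hu, hv, huv]
    field_simp
    rw [Real.sq_sqrt (by norm_num : (0:ℝ) ≤ 2)]; ring

theorem bell_1976_no_factorizable_model_general
    {Λ : Type*} [MeasurableSpace Λ] (μ : Measure Λ) [IsProbabilityMeasure μ]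
    (p q : ℝ → {v : EuclideanSpace ℝ (Fin 3) // ‖v‖ = 1} → Λ → ℝ)
    (hp0 : ∀ A, (A = 1 ∨ A = -1) → ∀ a l, 0 ≤ p A a l)
    (hq0 : ∀ B, (B = 1 ∨ B = -1) → ∀ b l, 0 ≤ q B b l)
    (hpsum : ∀ a l, p 1 a l + p (-1) a l = 1)
    (hqsum : ∀ b l, q 1 b l + q (-1) b l = 1)
    (hpm : ∀ A a, Measurable fun l => p A a l)
    (hqm : ∀ B b, Measurable fun l => q B b l) :
    ¬ ∀ (A B : ℝ), (A = 1 ∨ A = -1) → (B = 1 ∨ B = -1) →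
        ∀ (a b : {v : EuclideanSpace ℝ (Fin 3) // ‖v‖ = 1}),
          (∫ l, p A a l * q B b l ∂μ)
            = (1 - A * B * ⟪(a : EuclideanSpace ℝ (Fin 3)), (b : EuclideanSpace ℝ (Fin 3))⟫) / 4 := by
  intro hsinglet
  have hp : ∀ A, (A = 1 ∨ A = -1) → ∀ a l, |p A a l| ≤ 1 := by
    rintro A (rfl | rfl) a l <;> rw [abs_le] <;> constructor <;>
      linarith [hp0 1 (.inl rfl) a l, hp0 (-1) (.inr rfl) a l, hpsum a l]
  have hq : ∀ B, (B = 1 ∨ B = -1) → ∀ b l, |q B b l| ≤ 1 := by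
    rintro B (rfl | rfl) b l <;> rw [abs_le] <;> constructor <;>
      linarith [hq0 1 (.inl rfl) b l, hq0 (-1) (.inr rfl) b l, hqsum b l]
  have hP : ∀ a l, |p 1 a l - p (-1) a l| ≤ 1 := fun a l => by
    rw [abs_le]; constructor <;> linarith [hp0 1 (.inl rfl) a l, hp0 (-1) (.inr rfl) a l, hpsum a l]
  have hQ : ∀ b l, |q 1 b l - q (-1) b l| ≤ 1 := fun b l => by
    rw [abs_le]; constructor <;> linarith [hq0 1 (.inl rfl) b l, hq0 (-1) (.inr rfl) b l, hqsum b l]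
  have hcorr : ∀ a b, ∫ l, (p 1 a l - p (-1) a l) * (q 1 b l - q (-1) b l) ∂μ =
      -⟪(a : EuclideanSpace ℝ (Fin 3)), (b : EuclideanSpace ℝ (Fin 3))⟫ := by
    intro a b
    have hint : ∀ A B, (A = 1 ∨ A = -1) → (B = 1 ∨ B = -1) →
        Integrable (fun l => p A a l * q B b l) μ := fun A B hA hB =>
      integrable_mul_of_abs_le_one (hpm A a).aestronglyMeasurable (hqm B b).aestronglyMeasurable
        (hp A hA a) (hq B hB b)
    rw [integral_sub_mul_sub (hint _ _ (.inl rfl) (.inl rfl)) (hint _ _ (.inl rfl) (.inr rfl))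
      (hint _ _ (.inr rfl) (.inl rfl)) (hint _ _ (.inr rfl) (.inr rfl)),
      hsinglet _ _ (.inl rfl) (.inl rfl), hsinglet _ _ (.inl rfl) (.inr rfl),
      hsinglet _ _ (.inr rfl) (.inl rfl), hsinglet _ _ (.inr rfl) (.inr rfl)]
    ring
  let a₁ : {v : EuclideanSpace ℝ (Fin 3) // ‖v‖ = 1} := ⟨EuclideanSpace.single 0 1, by simp⟩
  let a₂ : {v : EuclideanSpace ℝ (Fin 3) // ‖v‖ = 1} := ⟨EuclideanSpace.single 1 1, by simp⟩
  obtain ⟨w₁, w₂, hw₁, hw₂, htsirelson⟩ :=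
    exists_chsh_inner_eq_two_mul_sqrt_two a₁.2 a₂.2
      (by simp [a₁, a₂, EuclideanSpace.inner_single_left])
  let b₁ : {v : EuclideanSpace ℝ (Fin 3) // ‖v‖ = 1} := ⟨w₁, hw₁⟩
  let b₂ : {v : EuclideanSpace ℝ (Fin 3) // ‖v‖ = 1} := ⟨w₂, hw₂⟩
  have hbell := abs_chsh_integral_le_two (μ := μ)
    (f₁ := fun l => p 1 a₁ l - p (-1) a₁ l) (f₂ := fun l => p 1 a₂ l - p (-1) a₂ l)
    (g₁ := fun l => q 1 b₁ l - q (-1) b₁ l) (g₂ := fun l => q 1 b₂ l - q (-1) b₂ l)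
    (by fun_prop) (by fun_prop) (by fun_prop) (by fun_prop) (hP a₁) (hP a₂) (hQ b₁) (hQ b₂)
  rw [hcorr, hcorr, hcorr, hcorr] at hbell
  linarith [(abs_le.1 hbell).1, Real.one_lt_sqrt_two]

/-- **Bell's 1976 theorem: quantum phenomena violate local causality.**
No factorizable (locally causal) stochastic model reproduces the singlet phenomenon:
for every probability space `(Λ, μ)` and local outcome distributions
`p(A|a,λ), q(B|b,λ) ∈ [0,1]`, measurable in `λ`, with `Σ_A p(A|a,λ) = Σ_B q(B|b,λ) = 1`,
it is not the case that `∫ p(A|a,λ)·q(B|b,λ) dμ(λ) = (1 − A·B·⟨a,b⟩)/4`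
for all outcomes `A, B ∈ {−1,1}` and all unit vectors `a, b ∈ ℝ³`. -/
theorem bell_1976_no_factorizable_model
    {Λ : Type*} [MeasurableSpace Λ] (μ : Measure Λ) [IsProbabilityMeasure μ]
    (p q : ℝ → {v : EuclideanSpace ℝ (Fin 3) // ‖v‖ = 1} → Λ → ℝ)
    (hp0 : ∀ A, (A = 1 ∨ A = -1) → ∀ a l, 0 ≤ p A a l)
    (hp1 : ∀ A, (A = 1 ∨ A = -1) → ∀ a l, p A a l ≤ 1)
    (hq0 : ∀ B, (B = 1 ∨ B = -1) → ∀ b l, 0 ≤ q B b l)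
    (hq1 : ∀ B, (B = 1 ∨ B = -1) → ∀ b l, q B b l ≤ 1)
    (hpsum : ∀ a l, p 1 a l + p (-1) a l = 1)
    (hqsum : ∀ b l, q 1 b l + q (-1) b l = 1)
    (hpm : ∀ A a, Measurable fun l => p A a l)
    (hqm : ∀ B b, Measurable fun l => q B b l) :
    ¬ ∀ (A B : ℝ), (A = 1 ∨ A = -1) → (B = 1 ∨ B = -1) →
        ∀ (a b : {v : EuclideanSpace ℝ (Fin 3) // ‖v‖ = 1}),
          (∫ l, p A a l * q B b l ∂μ)
            = (1 - A * B * ⟪(a : EuclideanSpace ℝ (Fin 3)), (b : EuclideanSpace ℝ (Fin 3))⟫) / 4 :=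
  bell_1976_no_factorizable_model_general μ p q hp0 hq0 hpsum hqsum hpm hqm
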